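/- arXiv:2605.14247 — 6 statements merged into one kernel-verified Lean document; each statement's English description precedes it below -/
import Mathlib

section
/- Fix integers N, m ≥ 1 and a weakly monotone surjection b : Fin N → Fin m. Let Λ be an N×N matrix over the field ℚ(q) of rational functions. Suppose (H, D, P, Q) and (H', D', P', Q') are two quadruples of N×N matrices such that: H and H' are lower block-unitriangular with all entries in A = ℤ[q,q⁻¹]; D and D' are block-diagonal over ℚ(q) and each of their diagonal blocks is an invertible matrix; P and P' are lower block-unitriangular with every entry outside the diagonal blocks lying in qℤ[q]; Q and Q' are lower block-unitriangular with every entry a bar-invariant element of A; and Λ = ᵗH·D·H = ᵗH'·D'·H' and H = P·Q, H' = P'·Q'. Then H = H', D = D', P = P' and Q = Q'. -/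
open LaurentPolynomial Matrix

/-- `M` is lower block-unitriangular with respect to the block function `b`. -/
def LowerBlockUnitriangular {R : Type*} [CommRing R] {N m : ℕ} (b : Fin N → Fin m)
    (M : Matrix (Fin N) (Fin N) R) : Prop :=
  (∀ i j, b i = b j → M i j = if i = j then (1 : R) else 0) ∧
  ∀ i j, b i < b j → M i j = 0

/-- `M` is block-diagonal with respect to the block function `b`. -/
def BlockDiagonalWrt {R : Type*} [CommRing R] {N m : ℕ} (b : Fin N → Fin m)
    (M : Matrix (Fin N) (Fin N) R) : Prop :=
  ∀ i j, b i ≠ b j → M i j = 0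

/-- The `r`-th diagonal block of `M`. -/
def diagBlock {R : Type*} [CommRing R] {N m : ℕ} (b : Fin N → Fin m)
    (M : Matrix (Fin N) (Fin N) R) (r : Fin m) :
    Matrix {i : Fin N // b i = r} {i : Fin N // b i = r} R :=
  Matrix.of fun i j => M i.1 j.1

/-- `f` lies in `qℤ[q]`: a polynomial in `q` with zero constant term,
i.e. all coefficients in degrees `≤ 0` vanish. -/
def MemqZq (f : LaurentPolynomial ℤ) : Prop := ∀ n : ℤ, n ≤ 0 → f.coeff n = 0

/-- `f` is invariant under the bar involution `q ↦ q⁻¹`. -/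
def BarInvariant (f : LaurentPolynomial ℤ) : Prop := invert f = f

/-- The canonical embedding of `A = ℤ[q,q⁻¹]` into `ℚ(q)`, sending `q` to `q`. -/
noncomputable def laurentToRatFunc : LaurentPolynomial ℤ →+* RatFunc ℚ :=
  ((AddMonoidAlgebra.lift ℤ (RatFunc ℚ) ℤ)
    ((Units.coeHom (RatFunc ℚ)).comp
      (zpowersHom (RatFunc ℚ)ˣ (Units.mk0 RatFunc.X RatFunc.X_ne_zero)))).toRingHom

/-!
Put `Y = H' H⁻¹`. From `ᵗH D H = ᵗH' D' H'` we get `ᵗ(H H'⁻¹) D = D' Y`; the left side is upper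
and the right side lower block-triangular, so both are block-diagonal. Their diagonal blocks are
those of `D` and of `D'`, hence `D = D'` and `D' Y = D'`, which forces `Y = 1` because a
block-diagonal matrix with invertible blocks is injective. Once `H = H'`, the matrix
`P'⁻¹ P = Q' Q⁻¹` is block-unitriangular with entries off the diagonal blocks lying in `qℤ[q]` and
bar-invariant; such Laurent polynomials vanish, so `P = P'` and `Q = Q'`. Inverses stay in these
classes because the part below the diagonal blocks is nilpotent, so the inverse is a finite
Neumann series.
-/

section BlockMatrices

variable {R : Type*} [CommRing R] {N m : ℕ}

def strictLowerBlock (b : Fin N → Fin m) (S : NonUnitalSubring R) :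
    NonUnitalSubring (Matrix (Fin N) (Fin N) R) where
  carrier := {L | ∀ i j, L i j ∈ S ∧ (b i ≤ b j → L i j = 0)}
  zero_mem' _ _ := ⟨S.zero_mem, fun _ => rfl⟩
  add_mem' {L L'} hL hL' i j :=
    ⟨S.add_mem (hL i j).1 (hL' i j).1, fun h => by simp [(hL i j).2 h, (hL' i j).2 h]⟩
  neg_mem' {L} hL i j := ⟨S.neg_mem (hL i j).1, fun h => by simp [(hL i j).2 h]⟩
  mul_mem' {L L'} hL hL' i j := by
    rw [mul_apply]
    refine ⟨S.sum_mem fun k _ => S.mul_mem (hL i k).1 (hL' k j).1, fun hij => ?_⟩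
    refine Finset.sum_eq_zero fun k _ => ?_
    rcases le_or_gt (b i) (b k) with hik | hki
    · rw [(hL i k).2 hik, zero_mul]
    · rw [(hL' k j).2 (hki.le.trans hij), mul_zero]

variable {b : Fin N → Fin m} {S T : NonUnitalSubring R} {L M : Matrix (Fin N) (Fin N) R}

lemma pow_apply_eq_zero_of_mem_strictLowerBlock (hL : L ∈ strictLowerBlock b S) (k : ℕ)
    {i j : Fin N} (h : (b i : ℕ) < b j + k) : (L ^ k) i j = 0 := by
  induction k generalizing j with
  | zero => exact one_apply_ne fun hij => by subst hij; omega
  | succ k ih =>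
    rw [pow_succ, mul_apply]
    refine Finset.sum_eq_zero fun l _ => ?_
    rcases le_or_gt (b l) (b j) with hlj | hjl
    · rw [(hL l j).2 hlj, mul_zero]
    · rw [ih (by rw [Fin.lt_def] at hjl; omega), zero_mul]

lemma pow_eq_zero_of_mem_strictLowerBlock (hL : L ∈ strictLowerBlock b S) : L ^ m = 0 := by
  ext i j
  exact pow_apply_eq_zero_of_mem_strictLowerBlock hL m (by omega)

lemma pow_succ_mem_strictLowerBlock (hL : L ∈ strictLowerBlock b S) (k : ℕ) :
    L ^ (k + 1) ∈ strictLowerBlock b S := by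
  induction k with
  | zero => simpa using hL
  | succ k ih => rw [pow_succ]; exact mul_mem ih hL

variable (b) in
def lowerBlockUnipotent (S : NonUnitalSubring R) : Submonoid (Matrix (Fin N) (Fin N) R) where
  carrier := {M | M - 1 ∈ strictLowerBlock b S}
  one_mem' := by simp only [Set.mem_ofPred_eq, sub_self, zero_mem]
  mul_mem' {M M'} hM hM' := by
    have h : M * M' - 1 = (M - 1) * (M' - 1) + (M - 1) + (M' - 1) := by noncomm_ring
    simp only [Set.mem_ofPred_eq, h]
    exact add_mem (add_mem (mul_mem hM hM') hM) hM'

lemma mem_lowerBlockUnipotent_iff :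
    M ∈ lowerBlockUnipotent b S ↔
      LowerBlockUnitriangular b M ∧ ∀ i j, b j < b i → M i j ∈ S := by
  have hsub (i j : Fin N) (hij : i ≠ j) : (M - 1) i j = M i j := by
    rw [Matrix.sub_apply, one_apply_ne hij, sub_zero]
  refine ⟨fun hM => ⟨⟨fun i j hij => ?_, fun i j hij => ?_⟩, fun i j hij => ?_⟩,
    fun ⟨hM, hS⟩ i j => ?_⟩
  · rw [← sub_eq_zero, ← one_apply]
    exact (hM i j).2 hij.le
  · rw [← hsub i j (ne_of_apply_ne b hij.ne)]
    exact (hM i j).2 hij.le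
  · rw [← hsub i j (ne_of_apply_ne b hij.ne')]
    exact (hM i j).1
  rcases lt_or_ge (b j) (b i) with hji | hij
  · rw [hsub i j (ne_of_apply_ne b hji.ne')]
    exact ⟨hS i j hji, fun h => absurd h hji.not_ge⟩
  have hzero : (M - 1) i j = 0 := by
    rcases hij.lt_or_eq with hij | hij
    · rw [hsub i j (ne_of_apply_ne b hij.ne), hM.2 i j hij]
    · rw [Matrix.sub_apply, hM.1 i j hij, one_apply, sub_self]
  exact ⟨hzero ▸ S.zero_mem, fun _ => hzero⟩

lemma one_sub_mem_strictLowerBlock (hM : M ∈ lowerBlockUnipotent b S) :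
    1 - M ∈ strictLowerBlock b S := by
  rw [← neg_sub]
  exact neg_mem hM

lemma mul_geom_sum_one_sub_eq_one (hM : M ∈ lowerBlockUnipotent b S) :
    M * ∑ k ∈ Finset.range (m + 1), (1 - M) ^ k = 1 := by
  simpa [pow_succ, pow_eq_zero_of_mem_strictLowerBlock (one_sub_mem_strictLowerBlock hM)]
    using mul_neg_geom_sum (1 - M) (m + 1)

lemma isUnit_det_of_mem_lowerBlockUnipotent (hM : M ∈ lowerBlockUnipotent b S) : IsUnit M.det :=
  isUnit_det_of_right_inverse (mul_geom_sum_one_sub_eq_one hM)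

lemma inv_mem_lowerBlockUnipotent (hM : M ∈ lowerBlockUnipotent b S) :
    M⁻¹ ∈ lowerBlockUnipotent b S := by
  show M⁻¹ - 1 ∈ strictLowerBlock b S
  rw [inv_eq_right_inv (mul_geom_sum_one_sub_eq_one hM), Finset.sum_range_succ', pow_zero,
    add_sub_cancel_right]
  exact sum_mem fun k _ => pow_succ_mem_strictLowerBlock (one_sub_mem_strictLowerBlock hM) k

lemma eq_one_of_mem_lowerBlockUnipotent_of_disjoint (hST : ∀ x ∈ S, x ∈ T → x = 0)
    (hS : M ∈ lowerBlockUnipotent b S) (hT : M ∈ lowerBlockUnipotent b T) : M = 1 := by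
  refine sub_eq_zero.mp (ext fun i j => ?_)
  exact hST _ (hS i j).1 (hT i j).1

theorem eq_and_eq_of_mul_eq_mul (hST : ∀ x ∈ S, x ∈ T → x = 0)
    {P P' Q Q' : Matrix (Fin N) (Fin N) R}
    (hP : P ∈ lowerBlockUnipotent b S) (hP' : P' ∈ lowerBlockUnipotent b S)
    (hQ : Q ∈ lowerBlockUnipotent b T) (hQ' : Q' ∈ lowerBlockUnipotent b T)
    (h : P * Q = P' * Q') : P = P' ∧ Q = Q' := by
  have hP'det := isUnit_det_of_mem_lowerBlockUnipotent hP'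
  have hcomm : P'⁻¹ * P = Q' * Q⁻¹ := by
    calc P'⁻¹ * P = P'⁻¹ * (P * Q) * Q⁻¹ := by
          rw [mul_assoc, mul_assoc, mul_nonsing_inv _ (isUnit_det_of_mem_lowerBlockUnipotent hQ),
            mul_one]
      _ = Q' * Q⁻¹ := by rw [h, ← mul_assoc, nonsing_inv_mul _ hP'det, one_mul]
  have hone : P'⁻¹ * P = 1 := eq_one_of_mem_lowerBlockUnipotent_of_disjoint hST
    (mul_mem (inv_mem_lowerBlockUnipotent hP') hP)
    (hcomm ▸ mul_mem hQ' (inv_mem_lowerBlockUnipotent hQ))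
  have hPP' : P = P' := by
    calc P = P' * (P'⁻¹ * P) := by rw [← mul_assoc, mul_nonsing_inv _ hP'det, one_mul]
      _ = P' := by rw [hone, mul_one]
  refine ⟨hPP', ((isUnit_iff_isUnit_det P').mpr hP'det).mul_left_cancel ?_⟩
  rwa [hPP'] at h

lemma BlockDiagonalWrt.transpose {D : Matrix (Fin N) (Fin N) R} (hD : BlockDiagonalWrt b D) :
    BlockDiagonalWrt b Dᵀ :=
  fun i j hij => hD j i (Ne.symm hij)

lemma BlockDiagonalWrt.mul_apply_of_le {D Y : Matrix (Fin N) (Fin N) R}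
    (hD : BlockDiagonalWrt b D) (hY : LowerBlockUnitriangular b Y) {i j : Fin N}
    (hij : b i ≤ b j) : (D * Y) i j = D i j := by
  rw [mul_apply, Finset.sum_eq_single j]
  · rw [hY.1 j j rfl, if_pos rfl, mul_one]
  · intro k _ hkj
    by_cases hik : b i = b k
    · rcases (hik ▸ hij).lt_or_eq with hkj' | hkj'
      · rw [hY.2 k j hkj', mul_zero]
      · rw [hY.1 k j hkj', if_neg hkj, mul_zero]
    · rw [hD i k hik, zero_mul]
  · exact fun hj => absurd (Finset.mem_univ j) hj

lemma BlockDiagonalWrt.eq_zero_of_mul_eq_zero {D X : Matrix (Fin N) (Fin N) R}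
    (hD : BlockDiagonalWrt b D) (hunit : ∀ r, IsUnit (diagBlock b D r)) (h : D * X = 0) :
    X = 0 := by
  classical
  ext k j
  obtain ⟨B, hB⟩ := (hunit (b k)).exists_left_inv
  let v : {i // b i = b k} → R := fun i => X i j
  have hv : diagBlock b D (b k) *ᵥ v = 0 := by
    funext i
    rw [Pi.zero_apply, ← zero_apply (i.1 : Fin N) j, ← h, mul_apply,
      ← Fintype.sum_subtype_add_sum_subtype (fun l => b l = b k),
      Fintype.sum_eq_zero (fun l : {l // b l ≠ b k} => D i l * X l j)
        (fun l => by rw [hD i l (i.2.trans_ne l.2.symm), zero_mul]), add_zero]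
    rfl
  have : v = 0 := by rw [← one_mulVec v, ← hB, ← mulVec_mulVec, hv, mulVec_zero]
  exact congrFun this ⟨k, rfl⟩

lemma LowerBlockUnitriangular.map {R' : Type*} [CommRing R'] {M : Matrix (Fin N) (Fin N) R}
    (hM : LowerBlockUnitriangular b M) (f : R →+* R') : LowerBlockUnitriangular b (M.map f) :=
  ⟨fun i j hij => by rw [map_apply, hM.1 i j hij]; split_ifs <;> simp,
    fun i j hij => by rw [map_apply, hM.2 i j hij, map_zero]⟩

lemma LowerBlockUnitriangular.mem_lowerBlockUnipotent_top (hM : LowerBlockUnitriangular b M) :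
    M ∈ lowerBlockUnipotent b ⊤ :=
  mem_lowerBlockUnipotent_iff.mpr ⟨hM, fun _ _ _ => trivial⟩

lemma LowerBlockUnitriangular.mul_nonsing_inv {A B : Matrix (Fin N) (Fin N) R}
    (hA : LowerBlockUnitriangular b A) (hB : LowerBlockUnitriangular b B) :
    LowerBlockUnitriangular b (A * B⁻¹) :=
  (mem_lowerBlockUnipotent_iff.mp (mul_mem hA.mem_lowerBlockUnipotent_top
    (inv_mem_lowerBlockUnipotent hB.mem_lowerBlockUnipotent_top))).1

theorem LowerBlockUnitriangular.eq_of_transpose_mul_mul_eq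
    {H H' D D' : Matrix (Fin N) (Fin N) R}
    (hH : LowerBlockUnitriangular b H) (hH' : LowerBlockUnitriangular b H')
    (hD : BlockDiagonalWrt b D) (hD' : BlockDiagonalWrt b D')
    (hD'unit : ∀ r, IsUnit (diagBlock b D' r)) (h : Hᵀ * D * H = H'ᵀ * D' * H') :
    H = H' ∧ D = D' := by
  have hHdet := isUnit_det_of_mem_lowerBlockUnipotent hH.mem_lowerBlockUnipotent_top
  have hH'det := isUnit_det_of_mem_lowerBlockUnipotent hH'.mem_lowerBlockUnipotent_top
  have hY := hH'.mul_nonsing_inv hH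
  have hZ := hH.mul_nonsing_inv hH'
  have hE : (H * H'⁻¹)ᵀ * D = D' * (H' * H⁻¹) := by
    calc (H * H'⁻¹)ᵀ * D = H'⁻¹ᵀ * (Hᵀ * D * H) * H⁻¹ := by
          rw [transpose_mul]
          simp only [mul_assoc, Matrix.mul_nonsing_inv _ hHdet, mul_one]
      _ = D' * (H' * H⁻¹) := by
          rw [h]
          simp only [← mul_assoc, ← transpose_mul, Matrix.mul_nonsing_inv _ hH'det, transpose_one,
            one_mul]
  have hE_of_le {i j} (hij : b i ≤ b j) : (D' * (H' * H⁻¹)) i j = D' i j :=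
    hD'.mul_apply_of_le hY hij
  have hE_of_ge {i j} (hij : b j ≤ b i) : (D' * (H' * H⁻¹)) i j = D i j := by
    rw [← hE, ← transpose_apply ((H * H'⁻¹)ᵀ * D), transpose_mul, transpose_transpose,
      hD.transpose.mul_apply_of_le hZ hij, transpose_apply]
  have hDD' : D = D' := by
    ext i j
    by_cases hij : b i = b j
    · rw [← hE_of_ge hij.ge, hE_of_le hij.le]
    · rw [hD i j hij, hD' i j hij]
  have hY1 : H' * H⁻¹ = 1 := by
    refine sub_eq_zero.mp (hD'.eq_zero_of_mul_eq_zero hD'unit ?_)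
    rw [mul_sub, mul_one, sub_eq_zero]
    ext i j
    rcases le_total (b i) (b j) with hij | hij
    · exact hE_of_le hij
    · rw [hE_of_ge hij, hDD']
  refine ⟨?_, hDD'⟩
  calc H = H' * H⁻¹ * H := by rw [hY1, one_mul]
    _ = H' := by rw [mul_assoc, nonsing_inv_mul _ hHdet, mul_one]

end BlockMatrices

section LaurentPolynomial

open Polynomial

lemma memqZq_iff {f : LaurentPolynomial ℤ} : MemqZq f ↔ ∀ n ∈ f.coeff.support, 0 < n :=
  forall_congr' fun n => by rw [Finsupp.mem_support_iff, ← not_lt, not_imp_comm]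

def qZqSubring : NonUnitalSubring (LaurentPolynomial ℤ) where
  carrier := {f | MemqZq f}
  zero_mem' _ _ := rfl
  add_mem' hf hg n hn := by simp [hf n hn, hg n hn]
  neg_mem' hf n hn := by simp [hf n hn]
  mul_mem' {f g} hf hg := by
    classical
    refine memqZq_iff.mpr fun n hn => ?_
    obtain ⟨k, hk, l, hl, rfl⟩ :=
      Finset.mem_add.mp (AddMonoidAlgebra.support_coeff_mul_subset f g hn)
    exact add_pos (memqZq_iff.mp hf k hk) (memqZq_iff.mp hg l hl)

noncomputable def barInvariantSubring : NonUnitalSubring (LaurentPolynomial ℤ) :=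
  (RingHom.eqLocus (invert : LaurentPolynomial ℤ ≃ₐ[ℤ] _).toRingEquiv.toRingHom
    (RingHom.id _)).toNonUnitalSubring

lemma MemqZq.eq_zero_of_barInvariant {f : LaurentPolynomial ℤ} (hq : MemqZq f)
    (hbar : BarInvariant f) : f = 0 := by
  ext n
  rcases le_or_gt n 0 with hn | hn
  · exact hq n hn
  · rw [← hbar, invert_apply]
    exact hq (-n) (by omega)

lemma laurentToRatFunc_T (n : ℤ) : laurentToRatFunc (T n) = RatFunc.X ^ n := by
  change AddMonoidAlgebra.lift ℤ (RatFunc ℚ) ℤ _ (AddMonoidAlgebra.single n 1) = _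
  rw [AddMonoidAlgebra.lift_single, Algebra.smul_def, map_one, one_mul]
  simp

lemma laurentToRatFunc_toLaurent (p : ℤ[X]) :
    laurentToRatFunc (toLaurent p) = algebraMap ℚ[X] (RatFunc ℚ) (p.map (Int.castRingHom ℚ)) := by
  rw [← RingHom.comp_apply, ← coe_mapRingHom, ← RingHom.comp_apply]
  congr 1
  refine ringHom_ext' (RingHom.ext_int _ _) ?_
  simp [laurentToRatFunc_T, RatFunc.algebraMap_X]

lemma laurentToRatFunc_injective : Function.Injective laurentToRatFunc := by
  refine (injective_iff_map_eq_zero _).mpr fun f hf => ?_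
  obtain ⟨n, p, hp⟩ := f.exists_T_pow
  have hp0 : p = 0 := by
    have : laurentToRatFunc (toLaurent p) = 0 := by rw [hp, map_mul, hf, zero_mul]
    rw [laurentToRatFunc_toLaurent,
      map_eq_zero_iff _ (IsFractionRing.injective ℚ[X] (RatFunc ℚ))] at this
    exact map_injective _ Int.cast_injective (this.trans (Polynomial.map_zero _).symm)
  rw [hp0, map_zero, eq_comm] at hp
  exact (isUnit_T n).mul_left_eq_zero.mp hp

end LaurentPolynomial

theorem stmt0_general (N m : ℕ) (b : Fin N → Fin m)
    (Λ : Matrix (Fin N) (Fin N) (RatFunc ℚ))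
    (H H' P P' Q Q' : Matrix (Fin N) (Fin N) (LaurentPolynomial ℤ))
    (D D' : Matrix (Fin N) (Fin N) (RatFunc ℚ))
    (hH : LowerBlockUnitriangular b H) (hH' : LowerBlockUnitriangular b H')
    (hD : BlockDiagonalWrt b D) (hD' : BlockDiagonalWrt b D')
    (hDinv' : ∀ r : Fin m, IsUnit (diagBlock b D' r))
    (hP : LowerBlockUnitriangular b P) (hP' : LowerBlockUnitriangular b P')
    (hPq : ∀ i j, b i ≠ b j → MemqZq (P i j))
    (hPq' : ∀ i j, b i ≠ b j → MemqZq (P' i j))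
    (hQ : LowerBlockUnitriangular b Q) (hQ' : LowerBlockUnitriangular b Q')
    (hQbar : ∀ i j, BarInvariant (Q i j))
    (hQbar' : ∀ i j, BarInvariant (Q' i j))
    (hΛ : Λ = (H.map laurentToRatFunc)ᵀ * D * (H.map laurentToRatFunc))
    (hΛ' : Λ = (H'.map laurentToRatFunc)ᵀ * D' * (H'.map laurentToRatFunc))
    (hHPQ : H = P * Q) (hHPQ' : H' = P' * Q') :
    H = H' ∧ D = D' ∧ P = P' ∧ Q = Q' := by
  obtain ⟨hHmap, hDD'⟩ := (hH.map laurentToRatFunc).eq_of_transpose_mul_mul_eq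
    (hH'.map laurentToRatFunc) hD hD' hDinv' (hΛ.symm.trans hΛ')
  have hHH' : H = H' := map_injective laurentToRatFunc_injective hHmap
  obtain ⟨hPP', hQQ'⟩ := eq_and_eq_of_mul_eq_mul (S := qZqSubring) (T := barInvariantSubring)
    (fun _ => MemqZq.eq_zero_of_barInvariant)
    (mem_lowerBlockUnipotent_iff.mpr ⟨hP, fun i j h => hPq i j h.ne'⟩)
    (mem_lowerBlockUnipotent_iff.mpr ⟨hP', fun i j h => hPq' i j h.ne'⟩)
    (mem_lowerBlockUnipotent_iff.mpr ⟨hQ, fun i j _ => hQbar i j⟩)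
    (mem_lowerBlockUnipotent_iff.mpr ⟨hQ', fun i j _ => hQbar' i j⟩)
    (hHPQ ▸ hHPQ' ▸ hHH')
  exact ⟨hHH', hDD', hPP', hQQ'⟩

theorem stmt0 (N m : ℕ) (hN : 1 ≤ N) (hm : 1 ≤ m) (b : Fin N → Fin m)
    (hmono : Monotone b) (hsurj : Function.Surjective b)
    (Λ : Matrix (Fin N) (Fin N) (RatFunc ℚ))
    (H H' P P' Q Q' : Matrix (Fin N) (Fin N) (LaurentPolynomial ℤ))
    (D D' : Matrix (Fin N) (Fin N) (RatFunc ℚ))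
    (hH : LowerBlockUnitriangular b H) (hH' : LowerBlockUnitriangular b H')
    (hD : BlockDiagonalWrt b D) (hD' : BlockDiagonalWrt b D')
    (hDinv : ∀ r : Fin m, IsUnit (diagBlock b D r))
    (hDinv' : ∀ r : Fin m, IsUnit (diagBlock b D' r))
    (hP : LowerBlockUnitriangular b P) (hP' : LowerBlockUnitriangular b P')
    (hPq : ∀ i j, b i ≠ b j → MemqZq (P i j))
    (hPq' : ∀ i j, b i ≠ b j → MemqZq (P' i j))
    (hQ : LowerBlockUnitriangular b Q) (hQ' : LowerBlockUnitriangular b Q')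
    (hQbar : ∀ i j, BarInvariant (Q i j))
    (hQbar' : ∀ i j, BarInvariant (Q' i j))
    (hΛ : Λ = (H.map laurentToRatFunc)ᵀ * D * (H.map laurentToRatFunc))
    (hΛ' : Λ = (H'.map laurentToRatFunc)ᵀ * D' * (H'.map laurentToRatFunc))
    (hHPQ : H = P * Q) (hHPQ' : H' = P' * Q') :
    H = H' ∧ D = D' ∧ P = P' ∧ Q = Q' :=
  stmt0_general N m b Λ H H' P P' Q Q' D D' hH hH' hD hD' hDinv' hP hP' hPq hPq' hQ hQ' hQbar hQbar'
    hΛ hΛ' hHPQ hHPQ'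
end

section
/- Fix integers N, m ≥ 1 and a weakly monotone surjection b : Fin N → Fin m, and let F be a field. Suppose H and H' are N×N lower block-unitriangular matrices over F, and D and D' are N×N block-diagonal matrices over F each of whose diagonal blocks is invertible. If ᵗH·D·H = ᵗH'·D'·H', then H = H' and D = D'. -/
/-!
Since `H` and `H'` have determinant one, the identity can be rewritten as
`D' * (H' * H⁻¹) = (H * H'⁻¹)ᵀ * D`. The left side is lower block-triangular and the right side
upper block-triangular, so both are block diagonal; multiplying a block-diagonal matrix by a
lower block-unitriangular one leaves its diagonal blocks unchanged, hence the common value equals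
both `D'` and `D`. Then `D' * (H' * H⁻¹) = D'` with `D'` invertible gives `H' = H`.
-/

open Matrix

open OrderDual

section

variable {R : Type*} [CommRing R] {N m : ℕ} {b : Fin N → Fin m}

namespace LowerBlockUnitriangular

variable {M P : Matrix (Fin N) (Fin N) R}

theorem blockTriangular (hM : LowerBlockUnitriangular b M) :
    M.BlockTriangular (toDual ∘ b) :=
  fun i j hij => hM.2 i j hij

theorem blockTriangular_transpose (hM : LowerBlockUnitriangular b M) :
    Mᵀ.BlockTriangular b :=
  fun i j hij => hM.2 j i hij

theorem toSquareBlock_eq_one (hM : LowerBlockUnitriangular b M) (r : (Fin m)ᵒᵈ) :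
    M.toSquareBlock (toDual ∘ b) r = 1 := by
  ext i j
  rw [toSquareBlock_def, of_apply, hM.1 i j (toDual.injective (i.2.trans j.2.symm)), one_apply]
  exact if_congr Subtype.ext_iff.symm rfl rfl

theorem det_eq_one (hM : LowerBlockUnitriangular b M) : M.det = 1 := by
  rw [hM.blockTriangular.det]
  exact Finset.prod_eq_one fun r _ => by rw [hM.toSquareBlock_eq_one, det_one]

theorem mul_apply_of_eq (hP : P.BlockTriangular (toDual ∘ b))
    (hM : LowerBlockUnitriangular b M) {i j : Fin N} (hij : b i = b j) :
    (P * M) i j = P i j := by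
  rw [mul_apply, Finset.sum_eq_single_of_mem j (Finset.mem_univ _)]
  · rw [hM.1 j j rfl, if_pos rfl, mul_one]
  · intro k _ hk
    rcases lt_trichotomy (b k) (b j) with hlt | heq | hgt
    · rw [hM.2 k j hlt, mul_zero]
    · rw [hM.1 k j heq, if_neg hk, mul_zero]
    · rw [hP (show b i < b k from hij ▸ hgt), zero_mul]

theorem transpose_mul_apply_of_eq (hM : LowerBlockUnitriangular b M)
    (hP : P.BlockTriangular b) {i j : Fin N} (hij : b i = b j) :
    (Mᵀ * P) i j = P i j := by
  rw [← transpose_apply (Mᵀ * P), transpose_mul, transpose_transpose,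
    mul_apply_of_eq hP.transpose hM hij.symm, transpose_apply]

theorem mul (hM : LowerBlockUnitriangular b M) (hP : LowerBlockUnitriangular b P) :
    LowerBlockUnitriangular b (M * P) :=
  ⟨fun i j hij => (mul_apply_of_eq hM.blockTriangular hP hij).trans (hM.1 i j hij),
    fun _ _ hij => hM.blockTriangular.mul hP.blockTriangular hij⟩

theorem inv (hM : LowerBlockUnitriangular b M) : LowerBlockUnitriangular b M⁻¹ := by
  have := M.invertibleOfIsUnitDet (hM.det_eq_one ▸ isUnit_one)
  have hinv := blockTriangular_inv_of_blockTriangular hM.blockTriangular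
  refine ⟨fun i j hij => ?_, fun _ _ hij => hinv hij⟩
  rw [← mul_apply_of_eq hinv hM hij, inv_mul_of_invertible, one_apply]

end LowerBlockUnitriangular

namespace BlockDiagonalWrt

variable {M P : Matrix (Fin N) (Fin N) R}

theorem blockTriangular (hM : BlockDiagonalWrt b M) : M.BlockTriangular b :=
  fun i j hij => hM i j hij.ne'

theorem blockTriangular_toDual (hM : BlockDiagonalWrt b M) :
    M.BlockTriangular (toDual ∘ b) :=
  fun i j hij => hM i j (show b i < b j from hij).ne

theorem of_blockTriangular (h : M.BlockTriangular b) (h' : M.BlockTriangular (toDual ∘ b)) :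
    BlockDiagonalWrt b M :=
  fun _ _ hij => hij.lt_or_gt.elim (fun hlt => h' hlt) (fun hgt => h hgt)

theorem ext (hM : BlockDiagonalWrt b M) (hP : BlockDiagonalWrt b P)
    (h : ∀ i j, b i = b j → M i j = P i j) : M = P := by
  ext i j
  by_cases hij : b i = b j
  · exact h i j hij
  · rw [hM i j hij, hP i j hij]

theorem isUnit_det (hM : BlockDiagonalWrt b M) (hblock : ∀ r, IsUnit (diagBlock b M r)) :
    IsUnit M.det := by
  rw [hM.blockTriangular.det]
  exact Finset.prod_induction _ IsUnit (fun _ _ => IsUnit.mul) isUnit_one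
    fun r _ => (isUnit_iff_isUnit_det _).mp (hblock r)

theorem eq_of_mul_eq_transpose_mul {D D' L U : Matrix (Fin N) (Fin N) R}
    (hD : BlockDiagonalWrt b D) (hD' : BlockDiagonalWrt b D')
    (hL : LowerBlockUnitriangular b L) (hU : LowerBlockUnitriangular b U)
    (h : D' * L = Uᵀ * D) : D' * L = D' ∧ D = D' := by
  have hX : BlockDiagonalWrt b (D' * L) :=
    of_blockTriangular (h ▸ hU.blockTriangular_transpose.mul hD.blockTriangular)
      (hD'.blockTriangular_toDual.mul hL.blockTriangular)
  have hXD' : D' * L = D' :=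
    hX.ext hD' fun _ _ hij => hL.mul_apply_of_eq hD'.blockTriangular_toDual hij
  have hXD : D' * L = D :=
    hX.ext hD fun _ _ hij => h ▸ hU.transpose_mul_apply_of_eq hD.blockTriangular hij
  exact ⟨hXD', hXD.symm.trans hXD'⟩

end BlockDiagonalWrt

end

theorem stmt1_general (N m : ℕ) (b : Fin N → Fin m)
    (F : Type*) [Field F]
    (H H' D D' : Matrix (Fin N) (Fin N) F)
    (hH : LowerBlockUnitriangular b H) (hH' : LowerBlockUnitriangular b H')
    (hD : BlockDiagonalWrt b D) (hD' : BlockDiagonalWrt b D')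
    (hDinv' : ∀ r : Fin m, IsUnit (diagBlock b D' r))
    (heq : Hᵀ * D * H = H'ᵀ * D' * H') :
    H = H' ∧ D = D' := by
  have := H.invertibleOfIsUnitDet (hH.det_eq_one ▸ isUnit_one)
  have := H'.invertibleOfIsUnitDet (hH'.det_eq_one ▸ isUnit_one)
  have key : D' * (H' * H⁻¹) = (H * H'⁻¹)ᵀ * D :=
    calc D' * (H' * H⁻¹) = H'ᵀ⁻¹ * (H'ᵀ * D' * H') * H⁻¹ := by
          simp only [mul_assoc, inv_mul_cancel_left_of_invertible]
      _ = H'ᵀ⁻¹ * (Hᵀ * D * H) * H⁻¹ := by rw [heq]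
      _ = (H * H'⁻¹)ᵀ * D := by
          rw [transpose_mul, transpose_nonsing_inv]
          simp only [mul_assoc, mul_inv_of_invertible, mul_one]
  obtain ⟨hcancel, hDD'⟩ := hD.eq_of_mul_eq_transpose_mul hD' (hH'.mul hH.inv) (hH.mul hH'.inv) key
  have hD'unit : IsUnit D' := (isUnit_iff_isUnit_det D').mpr (hD'.isUnit_det hDinv')
  have hH'H : H' * H⁻¹ = 1 := hD'unit.mul_left_cancel (hcancel.trans (mul_one D').symm)
  exact ⟨(inv_inv_of_invertible H).symm.trans (inv_eq_left_inv hH'H), hDD'⟩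

theorem stmt1 (N m : ℕ) (hN : 1 ≤ N) (hm : 1 ≤ m) (b : Fin N → Fin m)
    (hmono : Monotone b) (hsurj : Function.Surjective b)
    (F : Type*) [Field F]
    (H H' D D' : Matrix (Fin N) (Fin N) F)
    (hH : LowerBlockUnitriangular b H) (hH' : LowerBlockUnitriangular b H')
    (hD : BlockDiagonalWrt b D) (hD' : BlockDiagonalWrt b D')
    (hDinv : ∀ r : Fin m, IsUnit (diagBlock b D r))
    (hDinv' : ∀ r : Fin m, IsUnit (diagBlock b D' r))
    (heq : Hᵀ * D * H = H'ᵀ * D' * H') :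
    H = H' ∧ D = D' :=
  stmt1_general N m b F H H' D D' hH hH' hD hD' hDinv' heq
end

section
/- Fix integers N, m ≥ 1 and a weakly monotone surjection b : Fin N → Fin m. Suppose P and P' are N×N lower block-unitriangular matrices over A = ℤ[q,q⁻¹] with every entry outside the diagonal blocks lying in qℤ[q], and Q and Q' are N×N lower block-unitriangular matrices over A with every entry bar-invariant. If P·Q = P'·Q', then P = P' and Q = Q'. -/
open LaurentPolynomial

/-!
Induct on the block distance `b i - b j`. Since
`P * Q - P' * Q' = (P - P') * Q + P' * (Q - Q')` and the entries strictly between the blocks of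
`j` and `i` already agree, the `(i, j)` entry of this identity reads
`(P - P') i j + (Q - Q') i j = 0`. The first summand lies in `qℤ[q]`, the second is
bar-invariant, and these two subgroups of `ℤ[q, q⁻¹]` meet only in `0`.
-/

namespace LowerBlockUnitriangular

variable {R : Type*} [CommRing R] {N m : ℕ} {b : Fin N → Fin m}
  {P P' Q Q' : Matrix (Fin N) (Fin N) R}

theorem apply_eq_of_le (hP : LowerBlockUnitriangular b P) (hP' : LowerBlockUnitriangular b P')
    {i j : Fin N} (hij : b i ≤ b j) : P i j = P' i j := by
  rcases hij.eq_or_lt with h | h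
  · rw [hP.1 i j h, hP'.1 i j h]
  · rw [hP.2 i j h, hP'.2 i j h]

theorem mul_apply_of_right (hQ : LowerBlockUnitriangular b Q) (D : Matrix (Fin N) (Fin N) R)
    {i j : Fin N} (hD : ∀ k, b j < b k → D i k = 0) : (D * Q) i j = D i j := by
  rw [Matrix.mul_apply, Finset.sum_eq_single j (fun k _ hkj => ?_) (by simp),
    hQ.1 j j rfl, if_pos rfl, mul_one]
  rcases lt_trichotomy (b k) (b j) with h | h | h
  · rw [hQ.2 k j h, mul_zero]
  · rw [hQ.1 k j h, if_neg hkj, mul_zero]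
  · rw [hD k h, zero_mul]

theorem mul_apply_of_left (hP : LowerBlockUnitriangular b P) (E : Matrix (Fin N) (Fin N) R)
    {i j : Fin N} (hE : ∀ k, b k < b i → E k j = 0) : (P * E) i j = E i j := by
  rw [Matrix.mul_apply, Finset.sum_eq_single i (fun k _ hki => ?_) (by simp),
    hP.1 i i rfl, if_pos rfl, one_mul]
  rcases lt_trichotomy (b i) (b k) with h | h | h
  · rw [hP.2 i k h, zero_mul]
  · rw [hP.1 i k h, if_neg (Ne.symm hki), zero_mul]
  · rw [hE k h, mul_zero]

theorem sub_add_sub_eq_zero_of_mul_eq (hP' : LowerBlockUnitriangular b P')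
    (hQ : LowerBlockUnitriangular b Q) (heq : P * Q = P' * Q') {i j : Fin N}
    (hPi : ∀ k, b j < b k → P i k = P' i k) (hQj : ∀ k, b k < b i → Q k j = Q' k j) :
    (P i j - P' i j) + (Q i j - Q' i j) = 0 := by
  have hsplit : (P - P') * Q + P' * (Q - Q') = 0 := by
    rw [sub_mul, mul_sub, heq]; abel
  have := congrFun (congrFun hsplit i) j
  rwa [Matrix.add_apply, hQ.mul_apply_of_right _ (fun k hk => sub_eq_zero.2 (hPi k hk)),
    hP'.mul_apply_of_left _ (fun k hk => sub_eq_zero.2 (hQj k hk))] at this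

theorem eq_and_eq_of_mul_eq {S T : AddSubgroup R} (hST : Disjoint S T)
    (hP : LowerBlockUnitriangular b P) (hP' : LowerBlockUnitriangular b P')
    (hQ : LowerBlockUnitriangular b Q) (hQ' : LowerBlockUnitriangular b Q')
    (hPS : ∀ i j, b i ≠ b j → P i j ∈ S) (hP'S : ∀ i j, b i ≠ b j → P' i j ∈ S)
    (hQT : ∀ i j, b i ≠ b j → Q i j ∈ T) (hQ'T : ∀ i j, b i ≠ b j → Q' i j ∈ T)
    (heq : P * Q = P' * Q') : P = P' ∧ Q = Q' := by
  suffices key : ∀ d : ℕ, ∀ i j, (b i : ℕ) ≤ b j + d → P i j = P' i j ∧ Q i j = Q' i j from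
    ⟨Matrix.ext fun i j => (key m i j (by omega)).1,
      Matrix.ext fun i j => (key m i j (by omega)).2⟩
  intro d
  induction d with
  | zero =>
    intro i j hij
    have hle : b i ≤ b j := Fin.le_iff_val_le_val.2 hij
    exact ⟨hP.apply_eq_of_le hP' hle, hQ.apply_eq_of_le hQ' hle⟩
  | succ d ih =>
    intro i j hij
    by_cases hd : (b i : ℕ) ≤ b j + d
    · exact ih i j hd
    have hne : b i ≠ b j := fun h => hd (by rw [h]; omega)
    have hsum : (P i j - P' i j) + (Q i j - Q' i j) = 0 :=
      hP'.sub_add_sub_eq_zero_of_mul_eq hQ heq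
        (fun k hk => (ih i k (by rw [Fin.lt_def] at hk; omega)).1)
        (fun k hk => (ih k j (by rw [Fin.lt_def] at hk; omega)).2)
    have hPT : P i j - P' i j ∈ T := by
      rw [eq_neg_of_add_eq_zero_left hsum]
      exact T.neg_mem (T.sub_mem (hQT i j hne) (hQ'T i j hne))
    have hP0 := AddSubgroup.disjoint_def.1 hST (S.sub_mem (hPS i j hne) (hP'S i j hne)) hPT
    rw [hP0, zero_add] at hsum
    exact ⟨sub_eq_zero.1 hP0, sub_eq_zero.1 hsum⟩

end LowerBlockUnitriangular

def qZq : AddSubgroup (LaurentPolynomial ℤ) where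
  carrier := {f | MemqZq f}
  add_mem' hf hg n hn := by simp [hf n hn, hg n hn]
  zero_mem' n _ := by simp
  neg_mem' hf n hn := by simp [hf n hn]

def barInvariants : AddSubgroup (LaurentPolynomial ℤ) where
  carrier := {f | BarInvariant f}
  add_mem' hf hg := (map_add invert _ _).trans (congrArg₂ _ hf hg)
  zero_mem' := map_zero invert
  neg_mem' hf := (map_neg invert _).trans (congrArg _ hf)

theorem disjoint_qZq_barInvariants : Disjoint qZq barInvariants := by
  refine AddSubgroup.disjoint_def.2 fun {f} hq hbar => ?_
  ext n
  rcases le_or_gt n 0 with hn | hn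
  · exact hq n hn
  · change f.coeff n = 0
    rw [← hbar, invert_apply]
    exact hq (-n) (by omega)

theorem stmt3_general (N m : ℕ) (b : Fin N → Fin m)
    (P P' Q Q' : Matrix (Fin N) (Fin N) (LaurentPolynomial ℤ))
    (hP : LowerBlockUnitriangular b P) (hP' : LowerBlockUnitriangular b P')
    (hPq : ∀ i j, b i ≠ b j → MemqZq (P i j))
    (hPq' : ∀ i j, b i ≠ b j → MemqZq (P' i j))
    (hQ : LowerBlockUnitriangular b Q) (hQ' : LowerBlockUnitriangular b Q')
    (hQbar : ∀ i j, BarInvariant (Q i j))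
    (hQbar' : ∀ i j, BarInvariant (Q' i j))
    (heq : P * Q = P' * Q') :
    P = P' ∧ Q = Q' :=
  hP.eq_and_eq_of_mul_eq disjoint_qZq_barInvariants hP' hQ hQ' hPq hPq'
    (fun i j _ => hQbar i j) (fun i j _ => hQbar' i j) heq

theorem stmt3 (N m : ℕ) (hN : 1 ≤ N) (hm : 1 ≤ m) (b : Fin N → Fin m)
    (hmono : Monotone b) (hsurj : Function.Surjective b)
    (P P' Q Q' : Matrix (Fin N) (Fin N) (LaurentPolynomial ℤ))
    (hP : LowerBlockUnitriangular b P) (hP' : LowerBlockUnitriangular b P')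
    (hPq : ∀ i j, b i ≠ b j → MemqZq (P i j))
    (hPq' : ∀ i j, b i ≠ b j → MemqZq (P' i j))
    (hQ : LowerBlockUnitriangular b Q) (hQ' : LowerBlockUnitriangular b Q')
    (hQbar : ∀ i j, BarInvariant (Q i j))
    (hQbar' : ∀ i j, BarInvariant (Q' i j))
    (heq : P * Q = P' * Q') :
    P = P' ∧ Q = Q' :=
  stmt3_general N m b P P' Q Q' hP hP' hPq hPq' hQ hQ' hQbar hQbar' heq
end

section
/- Let n ≥ 1 and let 'adjacent' be a symmetric irreflexive relation on {0,1,…,n}. For every r ∈ {0,1,…,n}, the vertex r is a sink of the orientation σ_{r-1}(σ_{r-2}(⋯σ_1(σ_0(H₀))⋯)), where for r = 0 this orientation is interpreted as H₀ itself. -/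
/-- The orientation obtained from `H` by reversing every arrow incident to `i`. -/
def sigmaOr (i : ℕ) (H : Set (ℕ × ℕ)) : Set (ℕ × ℕ) :=
  {p | if p.1 = i ∨ p.2 = i then (p.2, p.1) ∈ H else p ∈ H}

/-- The orientation with all arrows from the larger vertex to the smaller. -/
def H0 (adj : ℕ → ℕ → Prop) : Set (ℕ × ℕ) :=
  {p | adj p.1 p.2 ∧ p.2 < p.1}

/-- `sigmaIter adj r = σ_{r-1}(σ_{r-2}(⋯σ_0(H₀)⋯))`, with `sigmaIter adj 0 = H₀`. -/
def sigmaIter (adj : ℕ → ℕ → Prop) : ℕ → Set (ℕ × ℕ)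
  | 0 => H0 adj
  | k + 1 => sigmaOr k (sigmaIter adj k)

/-- `i` is a sink of `H`: no arrow starts at `i`. -/
def IsSink (i : ℕ) (H : Set (ℕ × ℕ)) : Prop := ∀ b, (i, b) ∉ H

/- Crossing the cut between the vertices `< r` and `≥ r`, an edge has exactly one endpoint among
`0, …, r-1`, so it is reversed exactly once by `σ_0, …, σ_{r-1}`; every other edge keeps its `H₀`
direction. At the vertex `r` itself, arrows to larger vertices are absent from `H₀`, while the
arrows to smaller vertices point into `r` in `H₀` and are reversed once, so they still point
into `r`. -/

theorem mem_sigmaIter_iff (adj : ℕ → ℕ → Prop) (r x y : ℕ) :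
    (x, y) ∈ sigmaIter adj r ↔
      if min x y < r ∧ r ≤ max x y then (y, x) ∈ H0 adj else (x, y) ∈ H0 adj := by
  induction r generalizing x y with
  | zero => simp [sigmaIter]
  | succ k ih =>
    change (if x = k ∨ y = k then (y, x) ∈ sigmaIter adj k else (x, y) ∈ sigmaIter adj k) ↔ _
    split_ifs <;> simp only [ih] <;> split_ifs <;> first
      | rfl
      | omega
      | -- the remaining case is the loop `(k, k)`, which reversal leaves in place
        obtain rfl : x = y := by omega
        rfl

theorem isSink_sigmaIter (adj : ℕ → ℕ → Prop) (r : ℕ) : IsSink r (sigmaIter adj r) := by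
  intro b hb
  rw [mem_sigmaIter_iff] at hb
  split_ifs at hb
  · have : r < b := hb.2
    omega
  · have : b < r := hb.2
    omega

theorem stmt7_general (n : ℕ) (adj : ℕ → ℕ → Prop) :
    ∀ r, r ≤ n → IsSink r (sigmaIter adj r) :=
  fun r _ => isSink_sigmaIter adj r

theorem stmt7 (n : ℕ) (hn : 1 ≤ n) (adj : ℕ → ℕ → Prop)
    (hsymm : ∀ a b, adj a b → adj b a) (hirr : ∀ a, ¬ adj a a)
    (hbdd : ∀ a b, adj a b → a ≤ n ∧ b ≤ n) :
    ∀ r, r ≤ n → IsSink r (sigmaIter adj r) :=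
  stmt7_general n adj
end

section
/- Let n ≥ 1 and let 'adjacent' be a symmetric irreflexive relation on {0,1,…,n}. For r ∈ {0,1,…,n}, let H_r = σ_{r-1}(σ_{r-2}(⋯σ_0(H₀)⋯)) (with H_0 = H₀). Then for every adjacent pair of vertices k' < k: the arrow (k',k) belongs to H_r if and only if k' < r ≤ k, and otherwise the arrow (k,k') belongs to H_r. -/
/-!
The edge `{k', k}` with `k' < k` starts out oriented `k → k'` and is reversed by `σ_i` exactly
for `i = k'` and `i = k`. Among `σ_0, …, σ_{r-1}` these are the steps with `k' < r` and `k < r`,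
so after `r` steps the edge points `k' → k` iff exactly one of them has occurred, i.e. iff
`k' < r ≤ k`.
-/

section sigmaOr

variable {i a b : ℕ} {H : Set (ℕ × ℕ)}

theorem mem_sigmaOr_of_incident (h : a = i ∨ b = i) : (a, b) ∈ sigmaOr i H ↔ (b, a) ∈ H := by
  simp [sigmaOr, h]

theorem mem_sigmaOr_of_not_incident (ha : a ≠ i) (hb : b ≠ i) :
    (a, b) ∈ sigmaOr i H ↔ (a, b) ∈ H := by
  simp [sigmaOr, ha, hb]

end sigmaOr

theorem mem_sigmaIter_iff_s9 {adj : ℕ → ℕ → Prop} (hsymm : ∀ a b, adj a b → adj b a)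
    {k' k : ℕ} (hadj : adj k' k) (hlt : k' < k) (r : ℕ) :
    ((k', k) ∈ sigmaIter adj r ↔ k' < r ∧ r ≤ k) ∧
      ((k, k') ∈ sigmaIter adj r ↔ ¬(k' < r ∧ r ≤ k)) := by
  induction r with
  | zero => simpa [sigmaIter, H0, hlt, hlt.not_gt] using hsymm _ _ hadj
  | succ r ih =>
    rw [sigmaIter]
    by_cases hr : k' = r ∨ k = r
    · rw [mem_sigmaOr_of_incident hr, mem_sigmaOr_of_incident hr.symm, ih.1, ih.2]
      omega
    · rw [mem_sigmaOr_of_not_incident (by omega) (by omega),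
        mem_sigmaOr_of_not_incident (by omega) (by omega), ih.1, ih.2]
      omega

theorem stmt9_general (n : ℕ) (adj : ℕ → ℕ → Prop)
    (hsymm : ∀ a b, adj a b → adj b a) :
    ∀ r, r ≤ n → ∀ k' k : ℕ, adj k' k → k' < k →
      (((k', k) ∈ sigmaIter adj r ↔ (k' < r ∧ r ≤ k)) ∧
        (¬ (k' < r ∧ r ≤ k) → (k, k') ∈ sigmaIter adj r)) := by
  intro r _ k' k hadj hlt
  have h := mem_sigmaIter_iff_s9 hsymm hadj hlt r
  exact ⟨h.1, h.2.2⟩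

theorem stmt9 (n : ℕ) (hn : 1 ≤ n) (adj : ℕ → ℕ → Prop)
    (hsymm : ∀ a b, adj a b → adj b a) (hirr : ∀ a, ¬ adj a a)
    (hbdd : ∀ a b, adj a b → a ≤ n ∧ b ≤ n) :
    ∀ r, r ≤ n → ∀ k' k : ℕ, adj k' k → k' < k →
      (((k', k) ∈ sigmaIter adj r ↔ (k' < r ∧ r ≤ k)) ∧
        (¬ (k' < r ∧ r ≤ k) → (k, k') ∈ sigmaIter adj r)) :=
  stmt9_general n adj hsymm
end

section
/- Let I be a type and let Q₊ = I →₀ ℕ be the free additive monoid of finitely supported functions I → ℕ, with α_i denoting the function taking value 1 at i and 0 elsewhere. Let t ≥ 1 and let ν, ν' : Fin t → I be two functions. Suppose ξ : Fin t × Fin t → Q₊ satisfies Σ_{j} ξ(i,j) = α_{ν(i)} for every i ∈ Fin t and Σ_{i} ξ(i,j) = α_{ν'(j)} for every j ∈ Fin t. Then there exists a unique permutation w of Fin t such that for all i, j ∈ Fin t: ξ(i,j) = α_{ν(i)} if j = w(i), and ξ(i,j) = 0 if j ≠ w(i); moreover ν'(w(i)) = ν(i) for every i. -/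
/-!
Each `α_k` is additively irreducible in `Q₊` (its degree is `1`), and in a monoid whose only
additive unit is `0` a finite sum equals an irreducible element only if exactly one term is
nonzero. Hence every row and every column of `ξ` has exactly one nonzero entry, and the maps
sending a row to the position of its nonzero entry and a column to the position of its nonzero
entry are mutually inverse.
-/

open Finset

theorem Pi.single_apply_ne_zero_iff {ι : Type*} [DecidableEq ι] {M : ι → Type*}
    [∀ i, Zero (M i)] {b c : ι} {x : M b} (hx : x ≠ 0) : Pi.single b x c ≠ 0 ↔ c = b := by
  rcases eq_or_ne c b with rfl | hcb
  · simpa using hx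
  · simp [hcb]

theorem Finsupp.addIrreducible_single_one {σ : Type*} (a : σ) :
    AddIrreducible (Finsupp.single a 1 : σ →₀ ℕ) where
  not_isAddUnit := by simp
  isAddUnit_or_isAddUnit x y h := by
    have hdeg := congrArg degree h
    rw [map_add, degree_single] at hdeg
    simp only [isAddUnit_iff_eq_zero, ← degree_eq_zero_iff]
    omega

section TrivialAddUnits

variable {M ι : Type*} [AddCommMonoid M] [Subsingleton (AddUnits M)] {p : M}

theorem AddIrreducible.exists_eq_and_eq_zero_of_sum_eq (hp : AddIrreducible p)
    {s : Finset ι} {f : ι → M} (h : ∑ i ∈ s, f i = p) :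
    ∃ b ∈ s, f b = p ∧ ∀ c ∈ s, c ≠ b → f c = 0 := by
  induction s using Finset.cons_induction with
  | empty => exact absurd h.symm hp.ne_zero
  | cons a s ha ih =>
    rw [sum_cons] at h
    rcases hp.isAddUnit_or_isAddUnit h.symm with hfa | hrest
    · rw [isAddUnit_iff_eq_zero] at hfa
      obtain ⟨b, hb, hfb, hzero⟩ := ih (by rwa [hfa, zero_add] at h)
      refine ⟨b, mem_cons_of_mem hb, hfb, fun c hc hcb ↦ ?_⟩
      rcases mem_cons.1 hc with rfl | hc
      exacts [hfa, hzero c hc hcb]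
    · rw [isAddUnit_iff_eq_zero] at hrest
      refine ⟨a, mem_cons_self a s, by rwa [hrest, add_zero] at h, fun c hc hca ↦ ?_⟩
      exact sum_eq_zero_iff.1 hrest c ((mem_cons.1 hc).resolve_left hca)

theorem AddIrreducible.exists_eq_pi_single_of_sum_eq [Fintype ι] [DecidableEq ι]
    (hp : AddIrreducible p) {f : ι → M} (h : ∑ i, f i = p) : ∃ b, f = Pi.single b p := by
  obtain ⟨b, -, hfb, hzero⟩ := hp.exists_eq_and_eq_zero_of_sum_eq h
  refine ⟨b, funext fun c ↦ ?_⟩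
  rcases eq_or_ne c b with rfl | hcb
  · rw [Pi.single_eq_same, hfb]
  · rw [Pi.single_eq_of_ne hcb, hzero c (mem_univ c) hcb]

theorem Matrix.exists_perm_eq_pi_single_of_sum_eq_addIrreducible [Fintype ι] [DecidableEq ι]
    {A : Matrix ι ι M} {r c : ι → M} (hr : ∀ i, AddIrreducible (r i))
    (hc : ∀ j, AddIrreducible (c j)) (hrow : ∀ i, ∑ j, A i j = r i)
    (hcol : ∀ j, ∑ i, A i j = c j) :
    ∃ w : Equiv.Perm ι, ∀ i, A i = Pi.single (w i) (r i) ∧ c (w i) = r i := by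
  choose w hw using fun i ↦ (hr i).exists_eq_pi_single_of_sum_eq (hrow i)
  choose v hv using fun j ↦ (hc j).exists_eq_pi_single_of_sum_eq (hcol j)
  have hv' (i j : ι) : A i j = Pi.single (M := fun _ ↦ M) (v j) (c j) i := congrFun (hv j) i
  have hrow_supp (i j : ι) : A i j ≠ 0 ↔ j = w i := by
    rw [hw i, Pi.single_apply_ne_zero_iff (hr i).ne_zero]
  have hcol_supp (i j : ι) : A i j ≠ 0 ↔ i = v j := by
    rw [hv', Pi.single_apply_ne_zero_iff (hc j).ne_zero]
  have hvw (i : ι) : v (w i) = i := ((hcol_supp i (w i)).1 ((hrow_supp i _).2 rfl)).symm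
  have hwv (j : ι) : w (v j) = j := ((hrow_supp (v j) j).1 ((hcol_supp _ j).2 rfl)).symm
  refine ⟨⟨w, v, hvw, hwv⟩, fun i ↦ ⟨hw i, ?_⟩⟩
  calc c (w i) = A (v (w i)) (w i) := by rw [hv', Pi.single_eq_same]
    _ = r i := by rw [hvw, hw i, Pi.single_eq_same]

end TrivialAddUnits

theorem stmt12_general (I : Type*) (t : ℕ) (ν ν' : Fin t → I)
    (ξ : Fin t × Fin t → (I →₀ ℕ))
    (hrow : ∀ i : Fin t, ∑ j : Fin t, ξ (i, j) = Finsupp.single (ν i) 1)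
    (hcol : ∀ j : Fin t, ∑ i : Fin t, ξ (i, j) = Finsupp.single (ν' j) 1) :
    ∃! w : Equiv.Perm (Fin t),
      (∀ i j : Fin t,
        (j = w i → ξ (i, j) = Finsupp.single (ν i) 1) ∧
        (j ≠ w i → ξ (i, j) = 0)) ∧
      ∀ i : Fin t, ν' (w i) = ν i := by
  obtain ⟨w, hw⟩ := Matrix.exists_perm_eq_pi_single_of_sum_eq_addIrreducible
    (A := fun i j ↦ ξ (i, j)) (fun i ↦ Finsupp.addIrreducible_single_one (ν i))
    (fun j ↦ Finsupp.addIrreducible_single_one (ν' j)) hrow hcol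
  have hξ (i j : Fin t) :
      ξ (i, j) = Pi.single (M := fun _ ↦ I →₀ ℕ) (w i) (Finsupp.single (ν i) 1) j :=
    congrFun (hw i).1 j
  refine ⟨w, ⟨fun i j ↦ ⟨?_, fun hj ↦ ?_⟩, fun i ↦ ?_⟩, ?_⟩
  · rintro rfl
    rw [hξ, Pi.single_eq_same]
  · rw [hξ, Pi.single_eq_of_ne hj]
  · exact Finsupp.single_left_injective one_ne_zero (hw i).2
  · rintro w' ⟨hw', -⟩
    ext i : 1
    have hne : ξ (i, w' i) ≠ 0 := by simp [(hw' i (w' i)).1 rfl]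
    rw [hξ, Pi.single_apply_ne_zero_iff (by simp)] at hne
    rw [hne]

theorem stmt12 (I : Type*) (t : ℕ) (ht : 1 ≤ t) (ν ν' : Fin t → I)
    (ξ : Fin t × Fin t → (I →₀ ℕ))
    (hrow : ∀ i : Fin t, ∑ j : Fin t, ξ (i, j) = Finsupp.single (ν i) 1)
    (hcol : ∀ j : Fin t, ∑ i : Fin t, ξ (i, j) = Finsupp.single (ν' j) 1) :
    ∃! w : Equiv.Perm (Fin t),
      (∀ i j : Fin t,
        (j = w i → ξ (i, j) = Finsupp.single (ν i) 1) ∧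
        (j ≠ w i → ξ (i, j) = 0)) ∧
      ∀ i : Fin t, ν' (w i) = ν i :=
  stmt12_general I t ν ν' ξ hrow hcol
end
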